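/- Let M be an inverse monoid with identity 1, let α : M → M be a premorphism, and let m ∈ M satisfy m*m⁻¹ = α(1). If the map t ↦ α(t)*m preserves the heap operation, i.e. α(a*b⁻¹*c)*m = (α(a)*m)*(α(b)*m)⁻¹*(α(c)*m) for all a, b, c ∈ M, then α itself preserves the heap operation: α(a*b⁻¹*c) = α(a)*(α(b))⁻¹*α(c) for all a, b, c ∈ M. -/

import Mathlib

/-!
The idempotent `α 1 = m * m⁻¹` is a right identity for every `α x`, because `α x = α (x * 1)` lies
below `α x * α 1`. Multiplying the hypothesis on the right by `m⁻¹` and expanding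
`(α b * m)⁻¹ = m⁻¹ * (α b)⁻¹` (which in an inverse monoid rests on idempotents commuting) turns
both sides into the two sides of the claim, up to factors `α 1` that are then absorbed.
-/

/-- An inverse monoid: a monoid in which every element `a` has a
(unique) inverse `a⁻¹` with `a * a⁻¹ * a = a` and `a⁻¹ * a * a⁻¹ = a⁻¹`. -/
class InverseMonoid (M : Type*) extends Monoid M, Inv M where
  mul_inv_mul : ∀ a : M, a * a⁻¹ * a = a
  inv_mul_inv : ∀ a : M, a⁻¹ * a * a⁻¹ = a⁻¹
  inv_unique : ∀ a b : M, a * b * a = a → b * a * b = b → b = a⁻¹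

/-- The natural partial order on an inverse monoid:
`a ≤ b` iff `a = e * b` for some idempotent `e`. -/
def npo {M : Type*} [InverseMonoid M] (a b : M) : Prop :=
  ∃ e : M, e * e = e ∧ a = e * b

/-- A premorphism: `θ (a * b) ≤ θ a * θ b` in the natural partial order. -/
def IsPremorphism {M : Type*} [InverseMonoid M] (θ : M → M) : Prop :=
  ∀ a b : M, npo (θ (a * b)) (θ a * θ b)

namespace InverseMonoid

variable {M : Type*} [InverseMonoid M]

theorem inv_inv (a : M) : a⁻¹⁻¹ = a :=
  (inv_unique a⁻¹ a (inv_mul_inv a) (mul_inv_mul a)).symm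

theorem isIdempotentElem_mul_inv (a : M) : IsIdempotentElem (a * a⁻¹) := by
  rw [IsIdempotentElem, ← mul_assoc, mul_inv_mul]

theorem isIdempotentElem_inv_mul (a : M) : IsIdempotentElem (a⁻¹ * a) := by
  rw [IsIdempotentElem, ← mul_assoc, inv_mul_inv]

theorem inv_eq_self_of_isIdempotentElem {e : M} (he : IsIdempotentElem e) : e⁻¹ = e :=
  (inv_unique e e (by rw [he.eq, he.eq]) (by rw [he.eq, he.eq])).symm

/-- `f * (e * f)⁻¹ * e` is again an inverse of `e * f`, so it equals `(e * f)⁻¹`; this shows that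
`(e * f)⁻¹` is idempotent, hence self-inverse, hence equal to `e * f`. -/
theorem isIdempotentElem_mul {e f : M} (he : IsIdempotentElem e) (hf : IsIdempotentElem f) :
    IsIdempotentElem (e * f) := by
  set x := (e * f)⁻¹ with hx_def
  have hx : f * x * e = x := by
    refine inv_unique (e * f) (f * x * e) ?_ ?_
    · calc e * f * (f * x * e) * (e * f) = e * f * x * (e * f) := by
            simp only [mul_assoc, he.mul_self_mul, hf.mul_self_mul]
        _ = e * f := mul_inv_mul _
    · calc f * x * e * (e * f) * (f * x * e) = f * (x * (e * f) * x) * e := by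
            simp only [mul_assoc, he.mul_self_mul, hf.mul_self_mul]
        _ = f * x * e := by rw [hx_def, inv_mul_inv]
  have hxx : IsIdempotentElem x :=
    calc x * x = f * (x * (e * f) * x) * e := by
          conv_lhs => rw [← hx]
          simp only [mul_assoc]
      _ = x := by rw [hx_def, inv_mul_inv, hx]
  rwa [← inv_inv (e * f), ← hx_def, inv_eq_self_of_isIdempotentElem hxx]

theorem commute_of_isIdempotentElem {e f : M} (he : IsIdempotentElem e)
    (hf : IsIdempotentElem f) : Commute e f := by
  have hef := isIdempotentElem_mul he hf
  have hfe := isIdempotentElem_mul hf he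
  have h : f * e = (e * f)⁻¹ := by
    refine inv_unique (e * f) (f * e) ?_ ?_
    · calc e * f * (f * e) * (e * f) = e * f * (e * f) := by
            simp only [mul_assoc, he.mul_self_mul, hf.mul_self_mul]
        _ = e * f := hef
    · calc f * e * (e * f) * (f * e) = f * e * (f * e) := by
            simp only [mul_assoc, he.mul_self_mul, hf.mul_self_mul]
        _ = f * e := hfe
  rw [Commute, SemiconjBy, h, inv_eq_self_of_isIdempotentElem hef]

theorem mul_inv_rev (a b : M) : (a * b)⁻¹ = b⁻¹ * a⁻¹ := by
  have hc : b * b⁻¹ * (a⁻¹ * a) = a⁻¹ * a * (b * b⁻¹) :=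
    commute_of_isIdempotentElem (isIdempotentElem_mul_inv b) (isIdempotentElem_inv_mul a)
  refine (inv_unique (a * b) (b⁻¹ * a⁻¹) ?_ ?_).symm
  · calc a * b * (b⁻¹ * a⁻¹) * (a * b) = a * (b * b⁻¹ * (a⁻¹ * a)) * b := by
          simp only [mul_assoc]
      _ = a * a⁻¹ * a * (b * b⁻¹ * b) := by rw [hc]; simp only [mul_assoc]
      _ = a * b := by rw [mul_inv_mul, mul_inv_mul]
  · calc b⁻¹ * a⁻¹ * (a * b) * (b⁻¹ * a⁻¹) = b⁻¹ * (a⁻¹ * a * (b * b⁻¹)) * a⁻¹ := by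
          simp only [mul_assoc]
      _ = b⁻¹ * b * b⁻¹ * (a⁻¹ * a * a⁻¹) := by rw [← hc]; simp only [mul_assoc]
      _ = b⁻¹ * a⁻¹ := by rw [inv_mul_inv, inv_mul_inv]

end InverseMonoid

theorem npo.mul_eq_self_of_isIdempotentElem {M : Type*} [InverseMonoid M] {a b f : M}
    (hab : npo a (b * f)) (hf : IsIdempotentElem f) : a * f = a := by
  obtain ⟨e, -, rfl⟩ := hab
  simp only [mul_assoc, hf.eq]

theorem IsPremorphism.map_mul_map_one {M : Type*} [InverseMonoid M] {α : M → M}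
    (hα : IsPremorphism α) (h1 : IsIdempotentElem (α 1)) (x : M) : α x * α 1 = α x := by
  simpa only [mul_one] using (hα x 1).mul_eq_self_of_isIdempotentElem h1

theorem heap_preserving_action_implies_heap_preserving_premorphism
    {M : Type*} [InverseMonoid M] (α : M → M) (hα : IsPremorphism α)
    (m : M) (hm : m * m⁻¹ = α 1)
    (hheap : ∀ a b c : M,
      α (a * b⁻¹ * c) * m = (α a * m) * (α b * m)⁻¹ * (α c * m)) :
    ∀ a b c : M, α (a * b⁻¹ * c) = α a * (α b)⁻¹ * α c := by
  have habsorb : ∀ x, α x * α 1 = α x :=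
    hα.map_mul_map_one (hm ▸ InverseMonoid.isIdempotentElem_mul_inv m)
  intro a b c
  calc α (a * b⁻¹ * c)
      = α (a * b⁻¹ * c) * m * m⁻¹ := by rw [mul_assoc _ m, hm, habsorb]
    _ = α a * m * (α b * m)⁻¹ * (α c * m) * m⁻¹ := by rw [hheap]
    _ = α a * (m * m⁻¹) * (α b)⁻¹ * α c * (m * m⁻¹) := by
        rw [InverseMonoid.mul_inv_rev]; simp only [mul_assoc]
    _ = α a * (α b)⁻¹ * α c := by
        rw [hm, habsorb, mul_assoc _ (α c), habsorb]
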